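/- Let q be a prime with q ≡ 9 (mod 16) (so q splits in ℤ[√2]), and let 𝔮 be any prime ideal of ℤ[√2] lying above q. Then the image of 2 + √2 in the residue field ℤ[√2]/𝔮 (a field with q elements) is not a square. Equivalently, 𝔮 is inert in the quadratic extension ℚ(√(2+√2))/ℚ(√2). -/

import Mathlib

/-!
Put `θ = √(2 + √2)`, so that `θ² = t`. For `x ∈ 𝓞(ℚ(√2))` the conjugation `√2 ↦ -√2` shows that
`4x ∈ ℤ[√2]`; as `q` is odd and `2` is a square mod `q`, the residue field at `𝔮` is `𝔽_q`.
There, with `√2 = ζ + ζ⁻¹` for an eighth root of unity `ζ`, one has `ζ (2 + √2) = (1 + ζ)²`, so a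
square root of `2 + √2` yields an element of order `16` in `𝔽_q^×`, impossible as `q ≡ 9 (mod 16)`.
Hence `X² - t`, the minimal polynomial of `θ`, stays irreducible mod `𝔮`. The conjugation `θ ↦ -θ`
puts `2t` into the conductor of `𝓞(ℚ(√2))[θ]`, and `2t ∉ 𝔮`, so Kummer–Dedekind applies.
-/

open NumberField Polynomial Real

theorem FiniteField.not_isSquare_two_add_of_sq_eq_two {F : Type*} [Field F] [Fintype F]
    (hF : Fintype.card F % 16 = 9) {u : F} (hu : u ^ 2 = 2) : ¬IsSquare (2 + u) := by
  rintro ⟨z, hz⟩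
  have h2 : (2 : F) ≠ 0 :=
    Ring.two_ne_zero fun h ↦ by have := even_card_iff_char_two.mp h; omega
  obtain ⟨r, hr⟩ : IsSquare (-2 : F) := by
    simpa using (isSquare_neg_one_iff (F := F) |>.mpr (by omega)).mul
      (isSquare_two_iff (F := F) |>.mpr (by omega))
  -- `ζ := (u + r) / 2` is an eighth root of unity with `ζ + ζ⁻¹ = u`, so `ζ (2 + u) = (1 + ζ)²`
  obtain ⟨ζ, rfl⟩ : ∃ ζ, r = 2 * ζ - u := ⟨(u + r) / 2, by field_simp; ring⟩
  have hζ : ζ ^ 2 + 1 = u * ζ := by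
    apply mul_left_cancel₀ (mul_ne_zero h2 h2)
    linear_combination -hr - hu
  have hζ4 : ζ ^ 4 = -1 := by linear_combination (ζ ^ 2 + 1 + u * ζ) * hζ + ζ ^ 2 * hu
  have hz0 : z ≠ 0 := by
    rintro rfl
    exact h2 (by linear_combination (2 - u) * hz + hu)
  have hw8 : ((1 + ζ) / z) ^ 8 = -1 := by
    have hw2 : ((1 + ζ) / z) ^ 2 = ζ := by
      field_simp
      linear_combination ζ * hz + hζ
    rw [show ((1 + ζ) / z) ^ 8 = (((1 + ζ) / z) ^ 2) ^ 4 by ring, hw2, hζ4]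
  have hw := pow_card_sub_one_eq_one ((1 + ζ) / z) fun h ↦ by simp [h] at hw8
  obtain ⟨k, hk⟩ : ∃ k, Fintype.card F - 1 = 8 * (2 * k + 1) := ⟨Fintype.card F / 16, by omega⟩
  rw [hk, pow_mul, hw8, Odd.neg_one_pow ⟨k, rfl⟩] at hw
  exact h2 (by linear_combination -hw)

theorem minpoly.IsIntegrallyClosed.eq_of_irreducible_of_monic {R S : Type*} [CommRing R]
    [IsDomain R] [IsIntegrallyClosed R] [CommRing S] [IsDomain S] [Algebra R S]
    [Module.IsTorsionFree R S] {x : S} {p : R[X]} (hirr : Irreducible p)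
    (hp : Polynomial.aeval x p = 0) (hmon : p.Monic) : minpoly R x = p :=
  have hx : IsIntegral R x := ⟨p, hmon, hp⟩
  eq_of_monic_of_associated (minpoly.monic hx) hmon <|
    (minpoly.irreducible hx).associated_of_dvd hirr (minpoly.isIntegrallyClosed_dvd hx hp)

theorem Ideal.isPrime_map_of_sq_eq_of_not_isSquare {R S : Type*} [CommRing R] [IsDomain R]
    [IsIntegrallyClosed R] [CommRing S] [IsDedekindDomain S] [Algebra R S]
    [Module.IsTorsionFree R S] {𝔮 : Ideal R} [𝔮.IsMaximal] (h𝔮 : 𝔮 ≠ ⊥) {t c : R} {u : S}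
    (hu : u ^ 2 = algebraMap R S t) (ht : ¬IsSquare (Ideal.Quotient.mk 𝔮 t)) (hc : c ∉ 𝔮)
    (hcu : ∀ x : S, algebraMap R S c * x ∈ Algebra.adjoin R {u}) :
    (𝔮.map (algebraMap R S)).IsPrime := by
  have hroot : Polynomial.aeval u (X ^ 2 - C t) = 0 := by simp [hu]
  have hmon : (X ^ 2 - C t).Monic := monic_X_pow_sub_C t two_ne_zero
  have hirr : Irreducible ((X ^ 2 - C t).map (Ideal.Quotient.mk 𝔮)) := by
    let _ := Ideal.Quotient.field 𝔮
    rw [Polynomial.map_sub, Polynomial.map_pow, map_X, map_C]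
    exact X_pow_sub_C_irreducible_of_prime Nat.prime_two fun b hb ↦ ht ⟨b, by rw [← hb, sq]⟩
  have hmin : minpoly R u = X ^ 2 - C t := minpoly.IsIntegrallyClosed.eq_of_irreducible_of_monic
    (hmon.irreducible_of_irreducible_map _ _ hirr) hroot hmon
  have hcond : (conductor R u).comap (algebraMap R S) ⊔ 𝔮 = ⊤ := by
    have hcmem : c ∈ (conductor R u).comap (algebraMap R S) := mem_conductor_iff.mpr hcu
    by_contra hne
    exact hc <| (Ideal.IsMaximal.eq_of_le ‹_› hne le_sup_right).symm ▸ Ideal.mem_sup_left hcmem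
  rw [← hmin] at hirr
  exact Ideal.isPrime_of_prime <| UniqueFactorizationMonoid.irreducible_iff_prime.mp <|
    KummerDedekind.Ideal.irreducible_map_of_irreducible_minpoly ‹_› h𝔮 hcond ⟨_, hmon, hroot⟩ hirr

theorem Ideal.Quotient.bijective_zmodCastHom {R : Type*} [CommRing R] (𝔮 : Ideal R)
    [𝔮.IsMaximal] (p : ℕ) [Fact p.Prime] [CharP (R ⧸ 𝔮) p] {s : R}
    (hs : Ideal.Quotient.mk 𝔮 s ∈ (ZMod.castHom (dvd_refl p) (R ⧸ 𝔮)).range) {N : ℕ}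
    (hN : (N : ZMod p) ≠ 0) (h : ∀ x : R, ∃ m n : ℤ, N * x = m + n * s) :
    Function.Bijective (ZMod.castHom (dvd_refl p) (R ⧸ 𝔮)) := by
  let _ := Ideal.Quotient.field 𝔮
  set ψ := ZMod.castHom (dvd_refl p) (R ⧸ 𝔮)
  refine ⟨ψ.injective, fun y ↦ ?_⟩
  obtain ⟨x, rfl⟩ := Ideal.Quotient.mk_surjective y
  obtain ⟨a, ha⟩ := hs
  obtain ⟨m, n, hmn⟩ := h x
  refine ⟨(m + n * a) / N, ?_⟩
  rw [map_div₀, div_eq_iff ((map_ne_zero ψ).mpr hN)]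
  simpa [ha, mul_comm] using congrArg (Ideal.Quotient.mk 𝔮) hmn.symm

namespace Subfield

variable {K : Subfield ℝ} {α : ℝ}

theorem mem_of_sq_eq_sq {c : ℝ} (hc : c ∈ K) (h : c ^ 2 = α ^ 2) : α ∈ K := by
  rcases sq_eq_sq_iff_eq_or_eq_neg.mp h with rfl | rfl
  · exact hc
  · simpa using neg_mem hc

theorem eq_and_eq_of_add_mul_eq (hα : α ∉ K) {p q p' q' : ℝ} (hp : p ∈ K) (hq : q ∈ K)
    (hp' : p' ∈ K) (hq' : q' ∈ K) (h : p + q * α = p' + q' * α) : p = p' ∧ q = q' := by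
  by_cases hqq : q = q'
  · exact ⟨by linarith [h, hqq ▸ h], hqq⟩
  · refine absurd ?_ hα
    have : α = (p' - p) / (q - q') := by
      field_simp [sub_ne_zero.mpr hqq]
      linarith
    exact this ▸ div_mem (sub_mem hp' hp) (sub_mem hq hq')

theorem sub_mul_ne_zero_of_add_mul_ne_zero (hα : α ∉ K) {p q : ℝ} (hp : p ∈ K) (hq : q ∈ K)
    (h : p + q * α ≠ 0) : p - q * α ≠ 0 := by
  intro h'
  obtain ⟨rfl, hq0⟩ := eq_and_eq_of_add_mul_eq hα hp (neg_mem hq) (zero_mem K) (zero_mem K)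
    (by linarith : p + -q * α = 0 + 0 * α)
  exact h (by simp [neg_eq_zero.mp hq0])

def adjoinSqrt (K : Subfield ℝ) (α : ℝ) (hα : α ∉ K) (hα2 : α ^ 2 ∈ K) : Subfield ℝ where
  carrier := {x | ∃ p ∈ K, ∃ q ∈ K, x = p + q * α}
  zero_mem' := ⟨0, zero_mem K, 0, zero_mem K, by ring⟩
  one_mem' := ⟨1, one_mem K, 0, zero_mem K, by ring⟩
  add_mem' := by
    rintro _ _ ⟨p, hp, q, hq, rfl⟩ ⟨p', hp', q', hq', rfl⟩
    exact ⟨p + p', add_mem hp hp', q + q', add_mem hq hq', by ring⟩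
  neg_mem' := by
    rintro _ ⟨p, hp, q, hq, rfl⟩
    exact ⟨-p, neg_mem hp, -q, neg_mem hq, by ring⟩
  mul_mem' := by
    rintro _ _ ⟨p, hp, q, hq, rfl⟩ ⟨p', hp', q', hq', rfl⟩
    exact ⟨p * p' + q * q' * α ^ 2, add_mem (mul_mem hp hp') (mul_mem (mul_mem hq hq') hα2),
      p * q' + q * p', add_mem (mul_mem hp hq') (mul_mem hq hp'), by ring⟩
  inv_mem' := by
    rintro _ ⟨p, hp, q, hq, rfl⟩
    by_cases h : p + q * α = 0
    · exact ⟨0, zero_mem K, 0, zero_mem K, by simp [h]⟩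
    have hN : p ^ 2 - q ^ 2 * α ^ 2 ≠ 0 := by
      rw [show p ^ 2 - q ^ 2 * α ^ 2 = (p + q * α) * (p - q * α) by ring]
      exact mul_ne_zero h (sub_mul_ne_zero_of_add_mul_ne_zero hα hp hq h)
    have hNK : p ^ 2 - q ^ 2 * α ^ 2 ∈ K :=
      sub_mem (pow_mem hp 2) (mul_mem (pow_mem hq 2) hα2)
    refine ⟨p / (p ^ 2 - q ^ 2 * α ^ 2), div_mem hp hNK,
      -q / (p ^ 2 - q ^ 2 * α ^ 2), div_mem (neg_mem hq) hNK, ?_⟩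
    field_simp
    ring

variable {hα : α ∉ K} {hα2 : α ^ 2 ∈ K}

theorem mem_adjoinSqrt {x : ℝ} :
    x ∈ adjoinSqrt K α hα hα2 ↔ ∃ p ∈ K, ∃ q ∈ K, x = p + q * α := Iff.rfl

theorem closure_singleton_eq_adjoinSqrt (hK : K ≤ closure {α}) :
    closure {α} = adjoinSqrt K α hα hα2 := by
  refine le_antisymm (closure_le.mpr ?_) ?_
  · rintro _ rfl
    exact ⟨0, zero_mem K, 1, one_mem K, by ring⟩
  · rintro _ ⟨p, hp, q, hq, rfl⟩
    exact add_mem (hK hp) (mul_mem (hK hq) (subset_closure rfl))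

namespace adjoinSqrt

private noncomputable def conjFun (x : adjoinSqrt K α hα hα2) : ℝ :=
  (mem_adjoinSqrt.mp x.2).choose - (mem_adjoinSqrt.mp x.2).choose_spec.2.choose * α

private theorem conjFun_eq (x : adjoinSqrt K α hα hα2) {p q : ℝ} (hp : p ∈ K) (hq : q ∈ K)
    (hx : (x : ℝ) = p + q * α) : conjFun x = p - q * α := by
  obtain ⟨hp₀, q₀, hq₀, hx₀⟩ := (mem_adjoinSqrt.mp x.2).choose_spec
  obtain ⟨hq₀', hx₀'⟩ := (mem_adjoinSqrt.mp x.2).choose_spec.2.choose_spec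
  obtain ⟨rfl, rfl⟩ := eq_and_eq_of_add_mul_eq hα hp₀ hq₀' hp hq (hx₀'.symm.trans hx)
  rfl

noncomputable def conj : adjoinSqrt K α hα hα2 →+* ℝ where
  toFun := conjFun
  map_one' := by
    rw [conjFun_eq 1 (one_mem K) (zero_mem K) (by simp)]
    ring
  map_zero' := by
    rw [conjFun_eq 0 (zero_mem K) (zero_mem K) (by simp)]
    ring
  map_add' x y := by
    obtain ⟨p, hp, q, hq, hx⟩ := mem_adjoinSqrt.mp x.2
    obtain ⟨p', hp', q', hq', hy⟩ := mem_adjoinSqrt.mp y.2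
    rw [conjFun_eq x hp hq hx, conjFun_eq y hp' hq' hy,
      conjFun_eq (x + y) (add_mem hp hp') (add_mem hq hq') (by push_cast; rw [hx, hy]; ring)]
    ring
  map_mul' x y := by
    obtain ⟨p, hp, q, hq, hx⟩ := mem_adjoinSqrt.mp x.2
    obtain ⟨p', hp', q', hq', hy⟩ := mem_adjoinSqrt.mp y.2
    rw [conjFun_eq x hp hq hx, conjFun_eq y hp' hq' hy,
      conjFun_eq (x * y) (add_mem (mul_mem hp hp') (mul_mem (mul_mem hq hq') hα2))
        (add_mem (mul_mem hp hq') (mul_mem hq hp')) (by push_cast; rw [hx, hy]; ring)]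
    ring

theorem conj_apply (x : adjoinSqrt K α hα hα2) {p q : ℝ} (hp : p ∈ K) (hq : q ∈ K)
    (hx : (x : ℝ) = p + q * α) : conj x = p - q * α :=
  conjFun_eq x hp hq hx

end adjoinSqrt

/-- For `x = p + q α`, these are `x + conj x` and `α x + conj (α x)`. -/
theorem isIntegral_two_mul_of_isIntegral_add_mul (hα : α ∉ K) (hα2 : α ^ 2 ∈ K)
    (hαi : IsIntegral ℤ α) {p q : ℝ} (hp : p ∈ K) (hq : q ∈ K)
    (hx : IsIntegral ℤ (p + q * α)) : IsIntegral ℤ (2 * p) ∧ IsIntegral ℤ (2 * q * α ^ 2) := by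
  set E := adjoinSqrt K α hα hα2
  have hint (y : E) (hy : IsIntegral ℤ (y : ℝ)) : IsIntegral ℤ ((y : ℝ) + adjoinSqrt.conj y) :=
    hy.add <| ((isIntegral_algebraMap_iff (algebraMap E ℝ).injective).mp hy).map
      adjoinSqrt.conj.toIntAlgHom
  let x : E := ⟨p + q * α, p, hp, q, hq, rfl⟩
  let a : E := ⟨α, 0, zero_mem K, 1, one_mem K, by ring⟩
  constructor
  · convert hint x hx using 1
    rw [adjoinSqrt.conj_apply x hp hq rfl]
    ring
  · have hax : ((a * x : E) : ℝ) = q * α ^ 2 + p * α := by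
      push_cast
      ring
    convert hint (a * x) (hαi.mul hx) using 1
    rw [adjoinSqrt.conj_apply (a * x) (mul_mem hq hα2) hp hax, hax]
    ring

end Subfield

local notation "K₁" => Subfield.closure {√2}
local notation "K₂" => Subfield.closure {√(2 + √2)}

theorem sqrt_two_notMem_fieldRange : √2 ∉ (algebraMap ℚ ℝ).fieldRange := by
  rintro ⟨r, hr⟩
  exact irrational_sqrt_two ⟨r, hr⟩

theorem sq_sqrt_two_mem (K : Subfield ℝ) : √2 ^ 2 ∈ K := by
  rw [sq_sqrt zero_le_two]
  exact ofNat_mem K 2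

theorem closure_sqrt_two_eq :
    K₁ = Subfield.adjoinSqrt (algebraMap ℚ ℝ).fieldRange √2 sqrt_two_notMem_fieldRange
      (sq_sqrt_two_mem _) :=
  Subfield.closure_singleton_eq_adjoinSqrt fun _ ⟨r, hr⟩ ↦ hr ▸ SubfieldClass.ratCast_mem _ r

theorem sq_sqrt_two_add_sqrt_two : √(2 + √2) ^ 2 = 2 + √2 := sq_sqrt (by positivity)

theorem sqrt_two_add_sqrt_two_notMem : √(2 + √2) ∉ K₁ := by
  have h2 : (2 : ℝ) ∈ (algebraMap ℚ ℝ).fieldRange := ofNat_mem _ 2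
  have hsq : √2 ^ 2 = 2 := sq_sqrt zero_le_two
  rw [closure_sqrt_two_eq]
  rintro ⟨a, ha, b, hb, h⟩
  obtain ⟨e₁, e₂⟩ := Subfield.eq_and_eq_of_add_mul_eq sqrt_two_notMem_fieldRange h2 (one_mem _)
    (add_mem (pow_mem ha 2) (mul_mem h2 (pow_mem hb 2))) (mul_mem (mul_mem h2 ha) hb)
    (p' := a ^ 2 + 2 * b ^ 2) (q' := 2 * a * b) (by
      have hθ := sq_sqrt_two_add_sqrt_two
      rw [h] at hθ
      linear_combination -hθ + b ^ 2 * hsq)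
  exact sqrt_two_notMem_fieldRange <|
    Subfield.mem_of_sq_eq_sq (sub_mem (mul_mem h2 (pow_mem ha 2)) h2) (c := 2 * a ^ 2 - 2) (by
      linear_combination -4 * a ^ 2 * e₁ + 2 * (1 + 2 * a * b) * e₂ - hsq)

theorem sq_sqrt_two_add_sqrt_two_mem : √(2 + √2) ^ 2 ∈ K₁ := by
  rw [sq_sqrt_two_add_sqrt_two]
  exact add_mem (ofNat_mem _ 2) (Subfield.subset_closure rfl)

theorem closure_sqrt_two_add_sqrt_two_eq :
    K₂ = Subfield.adjoinSqrt K₁ √(2 + √2) sqrt_two_add_sqrt_two_notMem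
      sq_sqrt_two_add_sqrt_two_mem := by
  refine Subfield.closure_singleton_eq_adjoinSqrt (Subfield.closure_le.mpr ?_)
  rintro _ rfl
  have hθ : √(2 + √2) ∈ K₂ := Subfield.subset_closure rfl
  have h := sub_mem (pow_mem hθ 2) (ofNat_mem K₂ 2)
  rwa [sq_sqrt_two_add_sqrt_two, add_sub_cancel_left] at h

theorem isIntegral_sqrt_two : IsIntegral ℤ √2 :=
  .of_pow two_pos <| by
    rw [sq_sqrt zero_le_two]
    exact isIntegral_natCast (R := ℤ) (B := ℝ) 2

theorem isIntegral_sqrt_two_add_sqrt_two : IsIntegral ℤ √(2 + √2) :=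
  .of_pow two_pos <| by
    rw [sq_sqrt_two_add_sqrt_two]
    exact (isIntegral_natCast (R := ℤ) (B := ℝ) 2).add isIntegral_sqrt_two

theorem exists_int_eq_of_isIntegral {x : ℝ} (hx : x ∈ (algebraMap ℚ ℝ).fieldRange)
    (h : IsIntegral ℤ x) : ∃ m : ℤ, (m : ℝ) = x := by
  obtain ⟨r, rfl⟩ := hx
  obtain ⟨m, rfl⟩ := IsIntegrallyClosed.isIntegral_iff.mp <|
    (isIntegral_algebraMap_iff (algebraMap ℚ ℝ).injective).mp h
  exact ⟨m, by simp⟩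

namespace NumberField.RingOfIntegers

variable {K : Subfield ℝ}

noncomputable def toReal : 𝓞 K →+* ℝ := K.subtype.comp (algebraMap (𝓞 K) K)

theorem toReal_mem (y : 𝓞 K) : toReal y ∈ K := SetLike.coe_mem _

theorem toReal_injective : Function.Injective (toReal (K := K)) :=
  Subtype.val_injective.comp coe_injective

theorem isIntegral_toReal (y : 𝓞 K) : IsIntegral ℤ (toReal y) :=
  y.isIntegral_coe.algebraMap

theorem exists_toReal_eq {x : ℝ} (hx : x ∈ K) (h : IsIntegral ℤ x) : ∃ y : 𝓞 K, toReal y = x :=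
  ⟨⟨⟨x, hx⟩, (isIntegral_algebraMap_iff (algebraMap K ℝ).injective).mp h⟩, rfl⟩

end NumberField.RingOfIntegers

noncomputable def sqrtTwo : 𝓞 K₁ :=
  ⟨⟨√2, Subfield.subset_closure rfl⟩,
    (isIntegral_algebraMap_iff (algebraMap K₁ ℝ).injective).mp isIntegral_sqrt_two⟩

noncomputable def sqrtTwoAddSqrtTwo : 𝓞 K₂ :=
  ⟨⟨√(2 + √2), Subfield.subset_closure rfl⟩,
    (isIntegral_algebraMap_iff (algebraMap K₂ ℝ).injective).mp isIntegral_sqrt_two_add_sqrt_two⟩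

theorem toReal_sqrtTwo : RingOfIntegers.toReal sqrtTwo = √2 := rfl

theorem toReal_sqrtTwoAddSqrtTwo : RingOfIntegers.toReal sqrtTwoAddSqrtTwo = √(2 + √2) := rfl

theorem sqrtTwo_sq : sqrtTwo ^ 2 = 2 := RingOfIntegers.toReal_injective <| by
  rw [map_pow, map_ofNat, toReal_sqrtTwo, sq_sqrt zero_le_two]

theorem exists_int_four_mul_eq (x : 𝓞 K₁) : ∃ m n : ℤ, 4 * x = m + n * sqrtTwo := by
  obtain ⟨p, hp, q, hq, hx⟩ := (SetLike.ext_iff.mp closure_sqrt_two_eq _).mp x.toReal_mem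
  obtain ⟨hp2, hq2⟩ := Subfield.isIntegral_two_mul_of_isIntegral_add_mul sqrt_two_notMem_fieldRange
    (sq_sqrt_two_mem _) isIntegral_sqrt_two hp hq (hx ▸ x.isIntegral_toReal)
  obtain ⟨m, hm⟩ := exists_int_eq_of_isIntegral (mul_mem (ofNat_mem _ 2) hp) hp2
  obtain ⟨n, hn⟩ := exists_int_eq_of_isIntegral
    (mul_mem (mul_mem (ofNat_mem _ 2) hq) (sq_sqrt_two_mem _)) hq2
  refine ⟨2 * m, n, RingOfIntegers.toReal_injective ?_⟩
  simp only [map_mul, map_add, map_ofNat, map_intCast, toReal_sqrtTwo]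
  rw [hx, Int.cast_mul, hm, hn, sq_sqrt zero_le_two]
  push_cast
  ring

theorem exists_two_mul_two_add_sqrtTwo_mul_eq {f : 𝓞 K₁ →+* 𝓞 K₂}
    (hf : ∀ x, RingOfIntegers.toReal (f x) = RingOfIntegers.toReal x) (x : 𝓞 K₂) :
    ∃ y z : 𝓞 K₁, f (2 * (2 + sqrtTwo)) * x = f y + f z * sqrtTwoAddSqrtTwo := by
  obtain ⟨p, hp, q, hq, hx⟩ :=
    (SetLike.ext_iff.mp closure_sqrt_two_add_sqrt_two_eq _).mp x.toReal_mem
  obtain ⟨hp2, hq2⟩ := Subfield.isIntegral_two_mul_of_isIntegral_add_mul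
    sqrt_two_add_sqrt_two_notMem sq_sqrt_two_add_sqrt_two_mem isIntegral_sqrt_two_add_sqrt_two
    hp hq (hx ▸ x.isIntegral_toReal)
  obtain ⟨y, hy⟩ := RingOfIntegers.exists_toReal_eq (mul_mem (ofNat_mem _ 2) hp) hp2
  obtain ⟨z, hz⟩ := RingOfIntegers.exists_toReal_eq
    (mul_mem (mul_mem (ofNat_mem _ 2) hq) sq_sqrt_two_add_sqrt_two_mem) hq2
  refine ⟨(2 + sqrtTwo) * y, z, RingOfIntegers.toReal_injective ?_⟩
  simp only [map_mul, map_add, map_ofNat, hf, toReal_sqrtTwo, toReal_sqrtTwoAddSqrtTwo]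
  rw [hx, hy, hz, sq_sqrt_two_add_sqrt_two]
  ring

theorem bijective_zmodCastHom_quotient_sqrt_two (q : ℕ) [Fact q.Prime] (hq : q % 8 = 1)
    (𝔮 : Ideal (𝓞 K₁)) [𝔮.IsMaximal] [CharP (𝓞 K₁ ⧸ 𝔮) q] :
    Function.Bijective (ZMod.castHom (dvd_refl q) (𝓞 K₁ ⧸ 𝔮)) := by
  have hq1 := (Fact.out : q.Prime).one_lt
  obtain ⟨c, hc⟩ := (ZMod.exists_sq_eq_two_iff (by omega)).mpr (Or.inl hq)
  refine Ideal.Quotient.bijective_zmodCastHom 𝔮 q (N := 4) ?_ ?_ exists_int_four_mul_eq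
  · have hsc : Ideal.Quotient.mk 𝔮 sqrtTwo ^ 2 = ZMod.castHom (dvd_refl q) _ c ^ 2 := by
      rw [← map_pow, ← map_pow, sqrtTwo_sq, sq, ← hc, map_ofNat, map_ofNat]
    rcases sq_eq_sq_iff_eq_or_eq_neg.mp hsc with h | h
    · exact ⟨c, h.symm⟩
    · exact ⟨-c, by rw [h, map_neg]⟩
  · rw [Ne, ZMod.natCast_eq_zero_iff]
    intro h
    have := Nat.le_of_dvd (by norm_num) h
    omega

theorem not_isSquare_two_add_sqrtTwo (q : ℕ) [Fact q.Prime] (hq : q % 16 = 9)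
    (𝔮 : Ideal (𝓞 K₁)) [𝔮.IsMaximal] (hq𝔮 : (q : 𝓞 K₁) ∈ 𝔮) :
    ¬IsSquare (Ideal.Quotient.mk 𝔮 (2 + sqrtTwo)) := by
  have : CharP (𝓞 K₁ ⧸ 𝔮) q := (CharP.charP_iff_prime_eq_zero Fact.out).mpr <| by
    simpa using Ideal.Quotient.eq_zero_iff_mem.mpr hq𝔮
  have hψ := bijective_zmodCastHom_quotient_sqrt_two q (by omega) 𝔮
  let _ := Fintype.ofBijective _ hψ
  let _ := Ideal.Quotient.field 𝔮
  rw [map_add, map_ofNat]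
  exact FiniteField.not_isSquare_two_add_of_sq_eq_two
    (by rwa [← Fintype.card_of_bijective hψ, ZMod.card]) (by rw [← map_pow, sqrtTwo_sq, map_ofNat])

theorem isPrime_map_of_not_isSquare_two_add_sqrtTwo [NumberField K₁] [NumberField K₂]
    {𝔮 : Ideal (𝓞 K₁)} [𝔮.IsMaximal] (h𝔮 : 𝔮 ≠ ⊥)
    (hsq : ¬IsSquare (Ideal.Quotient.mk 𝔮 (2 + sqrtTwo))) {f : 𝓞 K₁ →+* 𝓞 K₂}
    (hf : ∀ x, RingOfIntegers.toReal (f x) = RingOfIntegers.toReal x) : (𝔮.map f).IsPrime := by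
  let _ := f.toAlgebra
  have : Module.IsTorsionFree (𝓞 K₁) (𝓞 K₂) :=
    Module.isTorsionFree_iff_algebraMap_injective.mpr fun x y h ↦
      RingOfIntegers.toReal_injective <| by rw [← hf x, ← hf y]; exact congrArg _ h
  have hmem : 2 + sqrtTwo ∉ 𝔮 := fun h ↦ hsq <| by
    rw [Ideal.Quotient.eq_zero_iff_mem.mpr h]
    exact IsSquare.zero
  -- `2 ∈ 𝔮` would force `√2 ∈ 𝔮`, making `2 + √2 ≡ 0` a square
  have h2 : (2 : 𝓞 K₁) ∉ 𝔮 := fun h ↦ hmem <| add_mem h <|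
    ‹𝔮.IsMaximal›.isPrime.mem_of_pow_mem 2 (sqrtTwo_sq ▸ h)
  refine Ideal.isPrime_map_of_sq_eq_of_not_isSquare h𝔮 (u := sqrtTwoAddSqrtTwo)
    (c := 2 * (2 + sqrtTwo)) ?_ hsq (‹𝔮.IsMaximal›.isPrime.mul_notMem h2 hmem) fun x ↦ ?_
  · refine RingOfIntegers.toReal_injective ?_
    rw [map_pow, RingHom.algebraMap_toAlgebra, hf, toReal_sqrtTwoAddSqrtTwo,
      sq_sqrt_two_add_sqrt_two, map_add, map_ofNat, toReal_sqrtTwo]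
  · obtain ⟨y, z, h⟩ := exists_two_mul_two_add_sqrtTwo_mul_eq hf x
    rw [RingHom.algebraMap_toAlgebra, h]
    exact add_mem (Subalgebra.algebraMap_mem _ y)
      (mul_mem (Subalgebra.algebraMap_mem _ z) (Algebra.self_mem_adjoin_singleton _ _))

/-- Let `q ≡ 9 (mod 16)` be a prime and let `𝔮` be any prime ideal of
`ℤ[√2]` (the ring of integers of `ℚ(√2)`) lying above `q`.  Then the image of `2 + √2`
in the residue field `ℤ[√2]/𝔮` is not a square; equivalently, `𝔮` is inert in
`ℚ(√(2+√2))/ℚ(√2)`, i.e. its extension to the ring of integers of `ℚ(√(2+√2))`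
is prime. -/
theorem stmt_7 (q : ℕ) [Fact q.Prime] (hq16 : q % 16 = 9)
    (Q1 L : Subfield ℝ)
    (hQ1 : Q1 = Subfield.closure {Real.sqrt 2})
    (hL : L = Subfield.closure {Real.sqrt (2 + Real.sqrt 2)})
    [NumberField Q1] [NumberField L]
    (𝔮 : Ideal (𝓞 Q1)) (h𝔮 : 𝔮.IsPrime) (hq𝔮 : (q : 𝓞 Q1) ∈ 𝔮)
    (t : 𝓞 Q1) (ht : ((t : Q1) : ℝ) = 2 + Real.sqrt 2) :
    (¬ ∃ y : 𝓞 Q1 ⧸ 𝔮, y ^ 2 = Ideal.Quotient.mk 𝔮 t) ∧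
    (∀ f : 𝓞 Q1 →+* 𝓞 L, (∀ x : 𝓞 Q1, ((f x : L) : ℝ) = ((x : Q1) : ℝ)) →
      (Ideal.map f 𝔮).IsPrime) := by
  subst hQ1 hL
  obtain rfl : t = 2 + sqrtTwo := RingOfIntegers.toReal_injective <| by
    rw [map_add, map_ofNat, toReal_sqrtTwo]
    exact ht
  have h𝔮bot : 𝔮 ≠ ⊥ := fun h ↦ by simp [h, (Fact.out : q.Prime).ne_zero] at hq𝔮
  have := h𝔮.isMaximal h𝔮bot
  have hsq := not_isSquare_two_add_sqrtTwo q hq16 𝔮 hq𝔮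
  exact ⟨fun ⟨y, hy⟩ ↦ hsq ⟨y, by rw [← hy, sq]⟩,
    fun f hf ↦ isPrime_map_of_not_isSquare_two_add_sqrtTwo h𝔮bot hsq hf⟩
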